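/- Object cloning (SemClone): let α = [m_d :ν_d τ_d]_{d∈D} be an object type with each τ_d a semantic type. If Σ ⊨ a : α, then Σ ⊨ clone(a) : α. -/

import Mathlib

set_option maxHeartbeats 1000000

namespace ImpObj

/-! # Syntax of the imperative object calculus (type annotations erased) -/

abbrev Var := ℕ
abbrev MethName := ℕ
abbrev Loc := ℕ

inductive Variance : Type where
  | inv | cov | con
  deriving DecidableEq

inductive Tm : Type where
  | var    : Var → Tm
  | obj    : Finset MethName → (MethName → Var) → (MethName → Tm) → Tm
  | vobj   : Finset MethName → (MethName → Loc) → Tm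
  | inv    : Tm → MethName → Tm
  | upd    : Tm → MethName → Var → Tm → Tm
  | clone  : Tm → Tm
  | lam    : Var → Tm → Tm
  | app    : Tm → Tm → Tm
  | fold   : Tm → Tm
  | unfd   : Tm → Tm
  | tlam   : Tm → Tm
  | tapp   : Tm → Tm
  | pack   : Tm → Tm
  | opn    : Tm → Var → Tm → Tm

/-- Free (term) variables. -/
def fv : Tm → Set Var
  | .var x => {x}
  | .obj D xs bs => ⋃ d ∈ D, (fv (bs d) \ {xs d})
  | .vobj _ _ => ∅
  | .inv a _ => fv a
  | .upd a _ x b => fv a ∪ (fv b \ {x})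
  | .clone a => fv a
  | .lam x b => fv b \ {x}
  | .app a b => fv a ∪ fv b
  | .fold a => fv a
  | .unfd a => fv a
  | .tlam a => fv a
  | .tapp a => fv a
  | .pack a => fv a
  | .opn a x b => fv a ∪ (fv b \ {x})

/-- Heap locations occurring in a term. -/
def locs : Tm → Set Loc
  | .var _ => ∅
  | .obj D _ bs => ⋃ d ∈ D, locs (bs d)
  | .vobj E ls => ls '' ↑E
  | .inv a _ => locs a
  | .upd a _ _ b => locs a ∪ locs b
  | .clone a => locs a
  | .lam _ b => locs b
  | .app a b => locs a ∪ locs b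
  | .fold a => locs a
  | .unfd a => locs a
  | .tlam a => locs a
  | .tapp a => locs a
  | .pack a => locs a
  | .opn a _ b => locs a ∪ locs b

/-- Values. -/
inductive IsVal : Tm → Prop where
  | vobj (E : Finset MethName) (ls : MethName → Loc) : IsVal (.vobj E ls)
  | lam (x : Var) (b : Tm) : IsVal (.lam x b)
  | fold {v : Tm} : IsVal v → IsVal (.fold v)
  | tlam (b : Tm) : IsVal (.tlam b)
  | pack {v : Tm} : IsVal v → IsVal (.pack v)

/-- Closed values. -/
def CVal : Type := {v : Tm // IsVal v ∧ fv v = ∅}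

/-- A run-time object is a closed value. -/
def CVal.mkVObj (E : Finset MethName) (ls : MethName → Loc) : CVal :=
  ⟨.vobj E ls, IsVal.vobj E ls, by simp [fv]⟩

def removeKey (σ : Var → Option Tm) (x : Var) : Var → Option Tm :=
  fun y => if y = x then none else σ y

/-- Simultaneous substitution of (closed) terms for free variables. -/
def msubst : Tm → (Var → Option Tm) → Tm
  | .var x, σ => (σ x).getD (.var x)
  | .obj D xs bs, σ => .obj D xs fun d => msubst (bs d) (removeKey σ (xs d))
  | .vobj E ls, _ => .vobj E ls
  | .inv a m, σ => .inv (msubst a σ) m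
  | .upd a m x b, σ => .upd (msubst a σ) m x (msubst b (removeKey σ x))
  | .clone a, σ => .clone (msubst a σ)
  | .lam x b, σ => .lam x (msubst b (removeKey σ x))
  | .app a b, σ => .app (msubst a σ) (msubst b σ)
  | .fold a, σ => .fold (msubst a σ)
  | .unfd a, σ => .unfd (msubst a σ)
  | .tlam a, σ => .tlam (msubst a σ)
  | .tapp a, σ => .tapp (msubst a σ)
  | .pack a, σ => .pack (msubst a σ)
  | .opn a x b, σ => .opn (msubst a σ) x (msubst b (removeKey σ x))

def subst1 (b : Tm) (x : Var) (v : Tm) : Tm :=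
  msubst b fun y => if y = x then some v else none

/-! # Heaps and small-step operational semantics -/

/-- Heaps: finite maps from locations to closed values. -/
structure Heap where
  fn : Loc → Option CVal
  fin : Set.Finite {l | fn l ≠ none}

def Heap.get? (h : Heap) (l : Loc) : Option Tm := (h.fn l).map Subtype.val

abbrev Config := Heap × Tm

/-- Evaluation contexts (left-to-right, call-by-value). -/
inductive ECtx : Type where
  | hole : ECtx
  | inv : ECtx → MethName → ECtx
  | upd : ECtx → MethName → Var → Tm → ECtx
  | clone : ECtx → ECtx
  | appL : ECtx → Tm → ECtx
  | appR : (v : Tm) → IsVal v → ECtx → ECtx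
  | fold : ECtx → ECtx
  | unfd : ECtx → ECtx
  | tapp : ECtx → ECtx
  | pack : ECtx → ECtx
  | opn : ECtx → Var → Tm → ECtx

def ECtx.plug : ECtx → Tm → Tm
  | .hole, a => a
  | .inv E m, a => .inv (E.plug a) m
  | .upd E m x b, a => .upd (E.plug a) m x b
  | .clone E, a => .clone (E.plug a)
  | .appL E b, a => .app (E.plug a) b
  | .appR v _ E, a => .app v (E.plug a)
  | .fold E, a => .fold (E.plug a)
  | .unfd E, a => .unfd (E.plug a)
  | .tapp E, a => .tapp (E.plug a)
  | .pack E, a => .pack (E.plug a)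
  | .opn E x b, a => .opn (E.plug a) x b

/-- Head (redex) reductions. -/
inductive Head : Config → Config → Prop where
  | obj {h h' : Heap} {D : Finset MethName} {xs : MethName → Var} {bs : MethName → Tm}
      {ls : MethName → Loc} :
      (∀ d ∈ D, h.fn (ls d) = none) →
      Set.InjOn ls ↑D →
      (∀ d ∈ D, h'.get? (ls d) = some (.lam (xs d) (bs d))) →
      (∀ l : Loc, (∀ d ∈ D, ls d ≠ l) → h'.fn l = h.fn l) →
      Head (h, .obj D xs bs) (h', .vobj D ls)
  | inv {h : Heap} {E : Finset MethName} {ls : MethName → Loc} {e : MethName} {f : Tm} :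
      e ∈ E → h.get? (ls e) = some f →
      Head (h, .inv (.vobj E ls) e) (h, .app f (.vobj E ls))
  | upd {h h' : Heap} {E : Finset MethName} {ls : MethName → Loc} {e : MethName}
      {x : Var} {b : Tm} :
      e ∈ E →
      h'.get? (ls e) = some (.lam x b) →
      (∀ l : Loc, l ≠ ls e → h'.fn l = h.fn l) →
      Head (h, .upd (.vobj E ls) e x b) (h', .vobj E ls)
  | clone {h h' : Heap} {E : Finset MethName} {ls ls' : MethName → Loc} :
      (∀ e ∈ E, h.fn (ls' e) = none) →
      Set.InjOn ls' ↑E →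
      (∀ e ∈ E, h'.fn (ls' e) = h.fn (ls e)) →
      (∀ l : Loc, (∀ e ∈ E, ls' e ≠ l) → h'.fn l = h.fn l) →
      Head (h, .clone (.vobj E ls)) (h', .vobj E ls')
  | beta {h : Heap} {x : Var} {b v : Tm} :
      IsVal v → Head (h, .app (.lam x b) v) (h, subst1 b x v)
  | unfold {h : Heap} {v : Tm} : IsVal v → Head (h, .unfd (.fold v)) (h, v)
  | tbeta {h : Heap} {b : Tm} : Head (h, .tapp (.tlam b)) (h, b)
  | openv {h : Heap} {v : Tm} {x : Var} {b : Tm} :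
      IsVal v → Head (h, .opn (.pack v) x b) (h, subst1 b x v)

/-- One-step reduction: closure of head reduction under evaluation contexts. -/
inductive Step : Config → Config → Prop where
  | ctx {h h' : Heap} {a a' : Tm} (E : ECtx) :
      Head (h, a) (h', a') → Step (h, E.plug a) (h', E.plug a')

/-- `k`-step reduction. -/
inductive StepN : ℕ → Config → Config → Prop where
  | refl (c : Config) : StepN 0 c c
  | tail {n : ℕ} {c c' c'' : Config} : StepN n c c' → Step c' c'' → StepN (n + 1) c c''

def Irred (c : Config) : Prop := ¬ ∃ c', Step c c'

/-- Safe for `k` steps. -/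
def SafeN (c : Config) (k : ℕ) : Prop :=
  ∀ j < k, ∀ c' : Config, StepN j c c' → Irred c' → IsVal c'.2

/-- Safe (for any number of steps). -/
def Safe (c : Config) : Prop := ∀ k, SafeN c k

/-! # The stratified step-indexed universe of pre-types -/

/-- `Approx k` is (the type of elements of) `PreType_k`: sets of triples `(j, Ψ, v)`
with `j < k` and `Ψ ∈ HeapPreTyping_j` a finite map from locations to `PreType_j`. -/
def Approx : ℕ → Type :=
  WellFounded.fix (Nat.lt_wfRel.wf) fun k ih =>
    Set ((j : Fin k) × ({Ψ : Loc → Option (ih j.1 j.isLt) // Set.Finite {l | Ψ l ≠ none}} × CVal))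

/-- Heap pre-typings of level `j`: finite maps from locations to `PreType_j`. -/
def HPT (j : ℕ) : Type :=
  {Ψ : Loc → Option (Approx j) // Set.Finite {l | Ψ l ≠ none}}

theorem Approx_eq (k : ℕ) :
    Approx k = Set ((j : Fin k) × (HPT j.1 × CVal)) :=
  WellFounded.fix_eq _ _ _

def Approx.out {k : ℕ} (S : Approx k) : Set ((j : Fin k) × (HPT j.1 × CVal)) :=
  cast (Approx_eq k) S

def Approx.mk' {k : ℕ} (S : Set ((j : Fin k) × (HPT j.1 × CVal))) : Approx k :=
  cast (Approx_eq k).symm S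

/-- Triples `(j, Ψ, v)` with `Ψ ∈ HeapPreTyping_j` and `v` a closed value. -/
def Triple : Type := (j : ℕ) × (HPT j × CVal)

/-- Pre-types: arbitrary sets of triples. -/
abbrev PreType : Type := Set Triple

/-- View an element of `PreType_k` as a pre-type. -/
def Approx.seg {k : ℕ} (S : Approx k) : PreType :=
  {t | ∃ hlt : t.1 < k, (⟨⟨t.1, hlt⟩, t.2⟩ : (j : Fin k) × (HPT j.1 × CVal)) ∈ S.out}

/-- The `k`-th approximation `⌊τ⌋_k` of a pre-type. -/
def papprox (τ : PreType) (k : ℕ) : PreType := {t ∈ τ | t.1 < k}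

/-- The `k`-th approximation of a pre-type, as an element of `PreType_k`. -/
def toApprox (τ : PreType) (k : ℕ) : Approx k :=
  Approx.mk' {p | (⟨p.1.1, p.2⟩ : Triple) ∈ τ}

def HPT.dom {k : ℕ} (Ψ : HPT k) : Set Loc := {l | Ψ.1 l ≠ none}

/-- `Ψ(l)`, viewed as a pre-type. -/
def HPT.look {k : ℕ} (Ψ : HPT k) (l : Loc) : Option PreType := (Ψ.1 l).map Approx.seg

/-- `⌊Ψ⌋_j(l) = ⌊Ψ(l)⌋_j`, viewed as a pre-type. -/
def HPT.lookA {k : ℕ} (Ψ : HPT k) (j : ℕ) (l : Loc) : Option PreType :=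
  (Ψ.look l).map (papprox · j)

/-- Pointwise approximation `⌊Ψ⌋_j` of a heap pre-typing. -/
def HPT.trunc {k : ℕ} (Ψ : HPT k) (j : ℕ) : HPT j :=
  ⟨fun l => (Ψ.1 l).map fun S => toApprox (Approx.seg S) j, by
    apply Ψ.2.subset
    intro l hl
    simp only [Set.mem_setOf_eq] at hl ⊢
    intro h0
    rw [h0] at hl
    exact hl rfl⟩

/-- A state `(k, Ψ)`. -/
structure St where
  k : ℕ
  Ψ : HPT k

/-- State extension `(k, Ψ) ⊑ (j, Ψ')`. -/
def StExt (s t : St) : Prop :=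
  t.k ≤ s.k ∧ s.Ψ.dom ⊆ t.Ψ.dom ∧ ∀ l ∈ s.Ψ.dom, t.Ψ.lookA t.k l = s.Ψ.lookA t.k l

/-- Semantic types: pre-types closed under state extension. -/
def IsSemType (τ : PreType) : Prop :=
  ∀ t ∈ τ, ∀ (j : ℕ) (Ψ' : HPT j),
    StExt ⟨t.1, t.2.1⟩ ⟨j, Ψ'⟩ → (⟨j, Ψ', t.2.2⟩ : Triple) ∈ τ

/-- Heap typings: heap pre-typings all of whose entries are semantic types. -/
def HPT.IsTy {k : ℕ} (Ψ : HPT k) : Prop :=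
  ∀ l S, Ψ.1 l = some S → IsSemType (Approx.seg S)

/-- Well-typed heap `h :_k Ψ`. -/
def HeapOk (h : Heap) {k : ℕ} (Ψ : HPT k) : Prop :=
  (∀ l ∈ Ψ.dom, h.fn l ≠ none) ∧
  ∀ j < k, ∀ l S, Ψ.1 l = some S → ∀ v : CVal, h.fn l = some v →
    (⟨j, Ψ.trunc j, v⟩ : Triple) ∈ Approx.seg S

/-- A closed term has type `τ` with respect to the state `(k, Ψ)`:  `a :_{k,Ψ} τ`. -/
def HasTypeAt (a : Tm) {k : ℕ} (Ψ : HPT k) (τ : PreType) : Prop :=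
  ∀ j < k, ∀ (h h' : Heap) (b : Tm),
    HeapOk h Ψ → StepN j (h, a) (h', b) → Irred (h', b) →
    ∃ Ψ' : HPT (k - j), Ψ'.IsTy ∧ StExt ⟨k, Ψ⟩ ⟨k - j, Ψ'⟩ ∧ HeapOk h' Ψ' ∧
      ∃ hb : IsVal b ∧ fv b = ∅, (⟨k - j, Ψ', ⟨b, hb⟩⟩ : Triple) ∈ τ

/-! # Semantic typing judgement -/

/-- Semantic type environments. -/
def SemEnv : Type := Var → Option PreType

/-- All types in the environment are semantic types. -/
def EnvSem (Γ : SemEnv) : Prop := ∀ x τ, Γ x = some τ → IsSemType τ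

def envExt (Γ : SemEnv) (x : Var) (τ : PreType) : SemEnv :=
  fun y => if y = x then some τ else Γ y

/-- Value environments. -/
def VEnv : Type := Var → Option CVal

/-- `σ :_{k,Ψ} Σ`. -/
def EnvOk (σ : VEnv) {k : ℕ} (Ψ : HPT k) (Γ : SemEnv) : Prop :=
  ∀ x τ, Γ x = some τ → ∃ v : CVal, σ x = some v ∧ HasTypeAt v.1 Ψ τ

def toSubst (σ : VEnv) : Var → Option Tm := fun x => (σ x).map Subtype.val

/-- The semantic typing judgement `Σ ⊨ a : τ`. -/
def SemJudg (Γ : SemEnv) (a : Tm) (τ : PreType) : Prop :=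
  fv a ⊆ {x | Γ x ≠ none} ∧
  ∀ (k : ℕ) (Ψ : HPT k), Ψ.IsTy → ∀ σ : VEnv, EnvOk σ Ψ Γ →
    HasTypeAt (msubst a (toSubst σ)) Ψ τ

/-! # Semantic type constructors -/

def botTy : PreType := ∅
def topTy : PreType := Set.univ

/-- Procedure types `α → β`. -/
def arrTy (α β : PreType) : PreType :=
  {t | ∃ (x : Var) (b : Tm), t.2.2.1 = Tm.lam x b ∧
    ∀ j < t.1, ∀ Ψ' : HPT j, Ψ'.IsTy → ∀ v : CVal,
      StExt ⟨t.1, t.2.1⟩ ⟨j, Ψ'⟩ → (⟨j, Ψ', v⟩ : Triple) ∈ α →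
      HasTypeAt (subst1 b x v.1) Ψ' β}

/-- "Triples" whose value component is a heap location. -/
def RefEl : Type := (k : ℕ) × (HPT k × Loc)

/-- Invariant reference types. -/
def refInv (τ : PreType) : Set RefEl :=
  {p | ∃ S, p.2.1.1 p.2.2 = some S ∧ papprox (Approx.seg S) p.1 = papprox τ p.1}

/-- Readable (covariant) reference types. -/
def refCov (τ : PreType) : Set RefEl :=
  {p | ∃ S, p.2.1.1 p.2.2 = some S ∧ papprox (Approx.seg S) p.1 ⊆ papprox τ p.1}

/-- Writable (contravariant) reference types. -/
def refCon (τ : PreType) : Set RefEl :=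
  {p | ∃ S, p.2.1.1 p.2.2 = some S ∧ papprox τ p.1 ⊆ papprox (Approx.seg S) p.1}

def refTy : Variance → PreType → Set RefEl
  | .inv => refInv
  | .cov => refCov
  | .con => refCon

/-- Generalized reference types `ref(τʷ, τʳ)`. -/
def refGen (τw τr : PreType) : Set RefEl := refTy .con τw ∩ refTy .cov τr

/-- Closure under state extension for sets of location-triples. -/
def RefClosed (R : Set RefEl) : Prop :=
  ∀ p ∈ R, ∀ (j : ℕ) (Ψ' : HPT j),
    StExt ⟨p.1, p.2.1⟩ ⟨j, Ψ'⟩ → (⟨j, Ψ', p.2.2⟩ : RefEl) ∈ R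

/-- Object types `[m_d :ν_d τ_d]_{d∈D}` (membership of `(k, Ψ, w)`). -/
def objSlice (D : Finset MethName) (ν : MethName → Variance) (τs : MethName → PreType)
    (k : ℕ) (Ψ : HPT k) (w : CVal) : Prop :=
  ∃ (E : Finset MethName) (ls : MethName → Loc),
    w.1 = Tm.vobj E ls ∧ D ⊆ E ∧
    ∃ α' : PreType, IsSemType α' ∧
      papprox α' k ⊆ {t : Triple | ∃ _hlt : t.1 < k, objSlice D ν τs t.1 t.2.1 t.2.2} ∧
      (∀ d ∈ D, (⟨k, Ψ, ls d⟩ : RefEl) ∈ refTy (ν d) (arrTy α' (τs d))) ∧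
      (∀ j, ∀ _hj : j < k, ∀ Ψ' : HPT j, ∀ ls' : MethName → Loc,
        StExt ⟨k, Ψ⟩ ⟨j, Ψ'⟩ →
        (∀ e ∈ E, Ψ'.lookA j (ls' e) = Ψ.lookA j (ls e)) →
        (⟨j, Ψ'.trunc j, CVal.mkVObj E ls'⟩ : Triple) ∈ α')
  termination_by k
  decreasing_by exact _hlt

def objTy (D : Finset MethName) (ν : MethName → Variance) (τs : MethName → PreType) :
    PreType :=
  {t | objSlice D ν τs t.1 t.2.1 t.2.2}

/-- Generalized object types `[m_d : τʷ_d / τʳ_d]_{d∈D}` (membership of `(k, Ψ, w)`). -/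
def objSliceG (D : Finset MethName) (τw τr : MethName → PreType)
    (k : ℕ) (Ψ : HPT k) (w : CVal) : Prop :=
  ∃ (E : Finset MethName) (ls : MethName → Loc),
    w.1 = Tm.vobj E ls ∧ D ⊆ E ∧
    ∃ α' : PreType, IsSemType α' ∧
      papprox α' k ⊆ {t : Triple | ∃ _hlt : t.1 < k, objSliceG D τw τr t.1 t.2.1 t.2.2} ∧
      (∀ d ∈ D, (⟨k, Ψ, ls d⟩ : RefEl) ∈ refGen (arrTy α' (τw d)) (arrTy α' (τr d))) ∧
      (∀ j, ∀ _hj : j < k, ∀ Ψ' : HPT j, ∀ ls' : MethName → Loc,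
        StExt ⟨k, Ψ⟩ ⟨j, Ψ'⟩ →
        (∀ e ∈ E, Ψ'.lookA j (ls' e) = Ψ.lookA j (ls e)) →
        (⟨j, Ψ'.trunc j, CVal.mkVObj E ls'⟩ : Triple) ∈ α')
  termination_by k
  decreasing_by exact _hlt

def objTyG (D : Finset MethName) (τw τr : MethName → PreType) : PreType :=
  {t | objSliceG D τw τr t.1 t.2.1 t.2.2}

/-- Non-expansive type constructors. -/
def NonExpansive (F : PreType → PreType) : Prop :=
  ∀ τ : PreType, IsSemType τ → ∀ k : ℕ, papprox (F τ) k = papprox (F (papprox τ k)) k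

/-- `F` maps semantic types to semantic types. -/
def SemPreserving (F : PreType → PreType) : Prop :=
  ∀ τ : PreType, IsSemType τ → IsSemType (F τ)

/-- Bounded universal types `∀_α F`. -/
def allTy (α : PreType) (F : PreType → PreType) : PreType :=
  {t | ∃ a : Tm, t.2.2.1 = Tm.tlam a ∧
    ∀ (j : ℕ) (Ψ' : HPT j), Ψ'.IsTy → ∀ τ : PreType, IsSemType τ →
      StExt ⟨t.1, t.2.1⟩ ⟨j, Ψ'⟩ → papprox τ j ⊆ papprox α j →
      ∀ i < j, HasTypeAt a (Ψ'.trunc i) (F τ)}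

/-- Bounded existential types `∃_α F`. -/
def exTy (α : PreType) (F : PreType → PreType) : PreType :=
  {t | ∃ v : CVal, t.2.2.1 = Tm.pack v.1 ∧
    ∃ τ : PreType, IsSemType τ ∧ papprox τ t.1 ⊆ papprox α t.1 ∧
      ∀ j < t.1, (⟨j, t.2.1.trunc j, v⟩ : Triple) ∈ F τ}

/-- Iso-recursive types `μF` (membership of `(k, Ψ, w)`). -/
def muMem (F : PreType → PreType) (k : ℕ) (Ψ : HPT k) (w : CVal) : Prop :=
  ∃ v : CVal, w.1 = Tm.fold v.1 ∧
    ∀ j, j < k →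
      (⟨j, Ψ.trunc j, v⟩ : Triple) ∈
        F {t : Triple | ∃ _hlt : t.1 < k, muMem F t.1 t.2.1 t.2.2}
  termination_by k
  decreasing_by exact _hlt

def muTy (F : PreType → PreType) : PreType := {t | muMem F t.1 t.2.1 t.2.2}

/-- The defining property of the object type `[m_d :ν_d τ_d]_{d∈D}` (fixed-point form). -/
def ObjMemProp (D : Finset MethName) (ν : MethName → Variance) (τs : MethName → PreType)
    (α : PreType) (k : ℕ) (Ψ : HPT k) (w : CVal) : Prop :=
  ∃ (E : Finset MethName) (ls : MethName → Loc),
    w.1 = Tm.vobj E ls ∧ D ⊆ E ∧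
    ∃ α' : PreType, IsSemType α' ∧
      papprox α' k ⊆ papprox α k ∧
      (∀ d ∈ D, (⟨k, Ψ, ls d⟩ : RefEl) ∈ refTy (ν d) (arrTy α' (τs d))) ∧
      (∀ j < k, ∀ Ψ' : HPT j, ∀ ls' : MethName → Loc,
        StExt ⟨k, Ψ⟩ ⟨j, Ψ'⟩ →
        (∀ e ∈ E, Ψ'.lookA j (ls' e) = Ψ.lookA j (ls e)) →
        (⟨j, Ψ'.trunc j, CVal.mkVObj E ls'⟩ : Triple) ∈ α')

/-- `α` satisfies the recursive specification of the object type. -/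
def ObjFix (D : Finset MethName) (ν : MethName → Variance) (τs : MethName → PreType)
    (α : PreType) : Prop :=
  ∀ t : Triple, t ∈ α ↔ ObjMemProp D ν τs α t.1 t.2.1 t.2.2

/-- `α` satisfies the defining equivalence of the recursive type `μF` and
consists only of `fold`-values. -/
def MuFix (F : PreType → PreType) (α : PreType) : Prop :=
  (∀ t ∈ α, ∃ v : Tm, t.2.2.1 = Tm.fold v) ∧
  ∀ (k : ℕ) (Ψ : HPT k) (v : CVal) (hv : IsVal (Tm.fold v.1) ∧ fv (Tm.fold v.1) = ∅),
    (⟨k, Ψ, ⟨Tm.fold v.1, hv⟩⟩ : Triple) ∈ α ↔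
      ∀ j < k, (⟨j, Ψ.trunc j, v⟩ : Triple) ∈ F α

/-! # The syntactic type system -/

inductive SType : Type where
  | tvar : ℕ → SType
  | top : SType
  | bot : SType
  | arr : SType → SType → SType
  | obj : Finset MethName → (MethName → Variance) → (MethName → SType) → SType
  | mu : ℕ → SType → SType
  | all : ℕ → SType → SType → SType
  | ex : ℕ → SType → SType → SType

/-- Free type variables of a syntactic type. -/
def ftv : SType → Set ℕ
  | .tvar X => {X}
  | .top => ∅
  | .bot => ∅
  | .arr A B => ftv A ∪ ftv B
  | .obj D _ As => ⋃ d ∈ D, ftv (As d)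
  | .mu X A => ftv A \ {X}
  | .all X A B => ftv A ∪ (ftv B \ {X})
  | .ex X A B => ftv A ∪ (ftv B \ {X})

/-- Substitution `A[X ↦ C]` of a type for a type variable. -/
def tsubst : SType → ℕ → SType → SType
  | .tvar Y, X, C => if Y = X then C else .tvar Y
  | .top, _, _ => .top
  | .bot, _, _ => .bot
  | .arr A B, X, C => .arr (tsubst A X C) (tsubst B X C)
  | .obj D ν As, X, C => .obj D ν fun d => tsubst (As d) X C
  | .mu Y A, X, C => if Y = X then .mu Y A else .mu Y (tsubst A X C)
  | .all Y A B, X, C => .all Y (tsubst A X C) (if Y = X then B else tsubst B X C)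
  | .ex Y A B, X, C => .ex Y (tsubst A X C) (if Y = X then B else tsubst B X C)

/-- Context bindings: `X <: A` and `x : A`. -/
inductive Bind : Type where
  | tv : ℕ → SType → Bind
  | v : Var → SType → Bind

abbrev SCtx := List Bind

def tvDom (Γ : SCtx) : Set ℕ := {X | ∃ A, Bind.tv X A ∈ Γ}
def vDom (Γ : SCtx) : Set Var := {x | ∃ A, Bind.v x A ∈ Γ}

/-- Well-formed typing contexts. -/
inductive WfCtx : SCtx → Prop where
  | nil : WfCtx []
  | consV {Γ : SCtx} {x : Var} {A : SType} :
      WfCtx Γ → x ∉ vDom Γ → ftv A ⊆ tvDom Γ → WfCtx (Bind.v x A :: Γ)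
  | consT {Γ : SCtx} {X : ℕ} {A : SType} :
      WfCtx Γ → X ∉ tvDom Γ → ftv A ⊆ tvDom Γ → WfCtx (Bind.tv X A :: Γ)

/-- Well-formed types. -/
def WfTy (Γ : SCtx) (A : SType) : Prop := WfCtx Γ ∧ ftv A ⊆ tvDom Γ

/-- The subtyping judgement `Γ ⊢ A <: B`. -/
inductive Sub : SCtx → SType → SType → Prop where
  | refl {Γ A} : WfTy Γ A → Sub Γ A A
  | trans {Γ A A' B} : Sub Γ A A' → Sub Γ A' B → Sub Γ A B
  | top {Γ A} : WfTy Γ A → Sub Γ A .top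
  | bot {Γ A} : WfTy Γ A → Sub Γ .bot A
  | tvar {Γ X A} : WfCtx Γ → Bind.tv X A ∈ Γ → Sub Γ (.tvar X) A
  | arr {Γ A A' B B'} : Sub Γ A' A → Sub Γ B B' → Sub Γ (.arr A B) (.arr A' B')
  | obj {Γ} {D E : Finset MethName} {ν : MethName → Variance} {As Bs : MethName → SType} :
      E ⊆ D →
      (∀ e ∈ E, (ν e = .cov ∨ ν e = .inv) → Sub Γ (As e) (Bs e)) →
      (∀ e ∈ E, (ν e = .con ∨ ν e = .inv) → Sub Γ (Bs e) (As e)) →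
      Sub Γ (.obj D ν As) (.obj E ν Bs)
  | objvar {Γ} {D : Finset MethName} {ν ν' : MethName → Variance} {As : MethName → SType} :
      (∀ d ∈ D, ν d = .inv ∨ ν d = ν' d) →
      Sub Γ (.obj D ν As) (.obj D ν' As)
  | mu {Γ X Y A B} : WfTy Γ (.mu X A) → WfTy Γ (.mu Y B) →
      Sub (Bind.tv X (.tvar Y) :: Bind.tv Y .top :: Γ) A B →
      Sub Γ (.mu X A) (.mu Y B)
  | all {Γ X A A' B B'} : Sub Γ A' A → Sub (Bind.tv X A' :: Γ) B B' →
      Sub Γ (.all X A B) (.all X A' B')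
  | ex {Γ X A A' B B'} : Sub Γ A A' → Sub (Bind.tv X A :: Γ) B B' →
      Sub Γ (.ex X A B) (.ex X A' B')

/-- Type-annotated (source) terms. -/
inductive STm : Type where
  | var : Var → STm
  | obj : Finset MethName → (MethName → Variance) → (MethName → SType) →
      (MethName → Var) → (MethName → STm) → STm
  | inv : STm → MethName → STm
  | upd : STm → MethName → Var → SType → STm → STm
  | clone : STm → STm
  | lam : Var → SType → STm → STm
  | app : STm → STm → STm
  | fold : SType → STm → STm
  | unfd : SType → STm → STm
  | tlam : ℕ → SType → STm → STm
  | tapp : STm → SType → STm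
  | pack : ℕ → SType → SType → STm → SType → STm
  | opn : STm → ℕ → SType → Var → SType → STm → SType → STm

/-- Erasure of all type annotations. -/
def erase : STm → Tm
  | .var x => .var x
  | .obj D _ _ xs bs => .obj D xs fun d => erase (bs d)
  | .inv a m => .inv (erase a) m
  | .upd a m x _ b => .upd (erase a) m x (erase b)
  | .clone a => .clone (erase a)
  | .lam x _ b => .lam x (erase b)
  | .app a b => .app (erase a) (erase b)
  | .fold _ a => .fold (erase a)
  | .unfd _ a => .unfd (erase a)
  | .tlam _ _ b => .tlam (erase b)
  | .tapp a _ => .tapp (erase a)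
  | .pack _ _ _ a _ => .pack (erase a)
  | .opn a _ _ x _ b _ => .opn (erase a) x (erase b)

/-- Substitution `a[X ↦ C]` of a type for a type variable inside a term. -/
def stsubst : STm → ℕ → SType → STm
  | .var x, _, _ => .var x
  | .obj D ν As xs bs, X, C =>
      .obj D ν (fun d => tsubst (As d) X C) xs fun d => stsubst (bs d) X C
  | .inv a m, X, C => .inv (stsubst a X C) m
  | .upd a m x A b, X, C => .upd (stsubst a X C) m x (tsubst A X C) (stsubst b X C)
  | .clone a, X, C => .clone (stsubst a X C)
  | .lam x A b, X, C => .lam x (tsubst A X C) (stsubst b X C)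
  | .app a b, X, C => .app (stsubst a X C) (stsubst b X C)
  | .fold A a, X, C => .fold (tsubst A X C) (stsubst a X C)
  | .unfd A a, X, C => .unfd (tsubst A X C) (stsubst a X C)
  | .tlam Y A b, X, C =>
      .tlam Y (tsubst A X C) (if Y = X then b else stsubst b X C)
  | .tapp a A, X, C => .tapp (stsubst a X C) (tsubst A X C)
  | .pack Y A B a B', X, C =>
      .pack Y (tsubst A X C) (tsubst B X C)
        (if Y = X then a else stsubst a X C) (if Y = X then B' else tsubst B' X C)
  | .opn a Y A x B b Cr, X, C =>
      .opn (stsubst a X C) Y (tsubst A X C) x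
        (if Y = X then B else tsubst B X C) (if Y = X then b else stsubst b X C)
        (tsubst Cr X C)

/-- The typing judgement `Γ ⊢ a : A`. -/
inductive Ty : SCtx → STm → SType → Prop where
  | sub {Γ a A B} : Ty Γ a A → Sub Γ A B → Ty Γ a B
  | var {Γ x A} : WfCtx Γ → Bind.v x A ∈ Γ → Ty Γ (.var x) A
  | lam {Γ x A b B} : Ty (Bind.v x A :: Γ) b B → Ty Γ (.lam x A b) (.arr A B)
  | app {Γ a b A B} : Ty Γ a (.arr B A) → Ty Γ b B → Ty Γ (.app a b) A
  | obj {Γ} {D : Finset MethName} {ν : MethName → Variance} {As : MethName → SType}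
      {xs : MethName → Var} {bs : MethName → STm} :
      (∀ d ∈ D, Ty (Bind.v (xs d) (.obj D ν As) :: Γ) (bs d) (As d)) →
      Ty Γ (.obj D ν As xs bs) (.obj D ν As)
  | clone {Γ a} {D : Finset MethName} {ν : MethName → Variance} {As : MethName → SType} :
      Ty Γ a (.obj D ν As) → Ty Γ (.clone a) (.obj D ν As)
  | inv {Γ a} {D : Finset MethName} {ν : MethName → Variance} {As : MethName → SType}
      {e : MethName} :
      Ty Γ a (.obj D ν As) → e ∈ D → (ν e = .cov ∨ ν e = .inv) →
      Ty Γ (.inv a e) (As e)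
  | upd {Γ a} {D : Finset MethName} {ν : MethName → Variance} {As : MethName → SType}
      {e : MethName} {x : Var} {b : STm} :
      Ty Γ a (.obj D ν As) → e ∈ D →
      Ty (Bind.v x (.obj D ν As) :: Γ) b (As e) → (ν e = .con ∨ ν e = .inv) →
      Ty Γ (.upd a e x (.obj D ν As) b) (.obj D ν As)
  | unfold {Γ a X A} :
      Ty Γ a (.mu X A) → Ty Γ (.unfd (.mu X A) a) (tsubst A X (.mu X A))
  | fold {Γ a X A} :
      Ty Γ a (tsubst A X (.mu X A)) → Ty Γ (.fold (.mu X A) a) (.mu X A)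
  | tabs {Γ X A b B} : Ty (Bind.tv X A :: Γ) b B → Ty Γ (.tlam X A b) (.all X A B)
  | tapp {Γ a X A B A'} :
      Ty Γ a (.all X A B) → Sub Γ A' A → Ty Γ (.tapp a A') (tsubst B X A')
  | pack {Γ X A C a B} : Sub Γ C A → Ty Γ (stsubst a X C) (tsubst B X C) →
      Ty Γ (.pack X A C a B) (.ex X A B)
  | opn {Γ a X A x B b C} : Ty Γ a (.ex X A B) → WfTy Γ C →
      Ty (Bind.v x B :: Bind.tv X A :: Γ) b C →
      Ty Γ (.opn a X A x B b C) C

/-! # Interpretation of syntactic types -/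

/-- The interpretation `⟦A⟧η` of a syntactic type. -/
def interp : SType → (ℕ → PreType) → PreType
  | .tvar X, η => η X
  | .top, _ => topTy
  | .bot, _ => botTy
  | .arr A B, η => arrTy (interp A η) (interp B η)
  | .obj D ν As, η => objTy D ν fun d => interp (As d) η
  | .mu X A, η => muTy fun α => interp A (Function.update η X α)
  | .all X A B, η => allTy (interp A η) fun α => interp B (Function.update η X α)
  | .ex X A B, η => exTy (interp A η) fun α => interp B (Function.update η X α)

/-- `η ⊨ Γ`: `η` maps type variables to semantic types and respects the bounds in `Γ`. -/
def EnvModels (η : ℕ → PreType) (Γ : SCtx) : Prop :=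
  (∀ X, IsSemType (η X)) ∧ ∀ X A, Bind.tv X A ∈ Γ → η X ⊆ interp A η

/-- The semantic type environment `⟦Γ⟧η`. -/
def interpCtx (Γ : SCtx) (η : ℕ → PreType) : SemEnv :=
  fun x =>
    Γ.findSome? fun b =>
      match b with
      | Bind.v y A => if y = x then some (interp A η) else none
      | _ => none

/-!
Evaluating `clone a` first evaluates `a`. By hypothesis the result is a run-time object
`{m_e = l_e}` of type `α` at a later state `(K, Ψ)`, so the clone step can fire; it copies each
`h(l_e)` to a fresh location `l'_e`. The new heap is `h ∘ src`, where `src` sends `l'_e` back to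
`l_e`, and we type it by `⌊Ψ⌋_n ∘ src`: this extends the state, keeps the heap well typed, and
the witness `α'` of (Obj-1)–(Obj-3) for the original object also works for the clone, since those
conditions only see the heap typing at the method locations, which agrees at `l_e` and `l'_e`.
-/

theorem Approx.out_mk' {k : ℕ} (S : Set ((j : Fin k) × (HPT j.1 × CVal))) :
    (Approx.mk' S).out = S := by
  simp [Approx.mk', Approx.out]

theorem seg_toApprox (τ : PreType) (j : ℕ) : Approx.seg (toApprox τ j) = papprox τ j := by
  ext t
  simp [Approx.seg, toApprox, Approx.out_mk', papprox, and_comm]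
  exact fun _ => Iff.rfl

theorem toApprox_papprox (τ : PreType) {j n : ℕ} (h : j ≤ n) :
    toApprox (papprox τ n) j = toApprox τ j := by
  unfold toApprox
  congr 1
  ext p
  exact ⟨And.left, fun hp => ⟨hp, p.1.2.trans_le h⟩⟩

theorem papprox_papprox (τ : PreType) {m j : ℕ} (h : m ≤ j) :
    papprox (papprox τ j) m = papprox τ m := by
  ext t
  exact ⟨fun ht => ⟨ht.1.1, ht.2⟩, fun ht => ⟨⟨ht.1, ht.2.trans_le h⟩, ht.2⟩⟩

theorem papprox_mono (τ : PreType) {m j : ℕ} (h : m ≤ j) : papprox τ m ⊆ papprox τ j :=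
  fun _ ht => ⟨ht.1, ht.2.trans_le h⟩

theorem papprox_subset_of_le {σ τ : PreType} {m j : ℕ} (hmj : m ≤ j)
    (h : papprox σ j ⊆ papprox τ j) : papprox σ m ⊆ papprox τ m :=
  fun _ ht => ⟨(h ⟨ht.1, ht.2.trans_le hmj⟩).1, ht.2⟩

theorem papprox_eq_of_le {σ τ : PreType} {m j : ℕ} (hmj : m ≤ j)
    (h : papprox σ j = papprox τ j) : papprox σ m = papprox τ m := by
  rw [← papprox_papprox σ hmj, h, papprox_papprox τ hmj]

theorem IsSemType.papprox {τ : PreType} (hτ : IsSemType τ) (j : ℕ) :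
    IsSemType (papprox τ j) :=
  fun _ ht _ Ψ' hext => ⟨hτ _ ht.1 _ Ψ' hext, hext.1.trans_lt ht.2⟩

theorem finite_ne_none_comp {β : Type*} {f : Loc → Option β} (hf : {l | f l ≠ none}.Finite)
    {src : Loc → Loc} (hsrc : {l | src l ≠ l}.Finite) : {l | f (src l) ≠ none}.Finite :=
  (hf.union hsrc).subset fun l hl => by
    by_cases h : src l = l
    · exact Or.inl (by simpa [h] using hl)
    · exact Or.inr h

namespace HPT

variable {k : ℕ}

theorem lookA_eq_some {Ψ : HPT k} {l : Loc} {S : Approx k} (h : Ψ.1 l = some S) (j : ℕ) :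
    Ψ.lookA j l = some (papprox (Approx.seg S) j) := by
  simp [lookA, look, h]

theorem lookA_of_le (Ψ : HPT k) {m j : ℕ} (h : m ≤ j) (l : Loc) :
    Ψ.lookA m l = (Ψ.lookA j l).map (papprox · m) := by
  cases hl : Ψ.1 l <;> simp [lookA, look, hl, papprox_papprox _ h]

theorem lookA_trunc (Ψ : HPT k) {m j : ℕ} (h : m ≤ j) (l : Loc) :
    (Ψ.trunc j).lookA m l = Ψ.lookA m l := by
  cases hl : Ψ.1 l <;> simp [lookA, look, trunc, hl, seg_toApprox, papprox_papprox _ h]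

theorem dom_trunc (Ψ : HPT k) (j : ℕ) : (Ψ.trunc j).dom = Ψ.dom := by
  ext l
  cases hl : Ψ.1 l <;> simp [dom, trunc, hl]

theorem trunc_trunc (Ψ : HPT k) {j n : ℕ} (h : j ≤ n) : (Ψ.trunc n).trunc j = Ψ.trunc j := by
  apply Subtype.ext
  funext l
  cases hl : Ψ.1 l <;> simp [trunc, hl, seg_toApprox, toApprox_papprox _ h]

theorem IsTy.trunc {Ψ : HPT k} (hΨ : Ψ.IsTy) (j : ℕ) : (Ψ.trunc j).IsTy := by
  intro l S hS
  cases hl : Ψ.1 l with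
  | none => simp [HPT.trunc, hl] at hS
  | some S₀ =>
    obtain rfl : toApprox (Approx.seg S₀) j = S := by simpa [HPT.trunc, hl] using hS
    rw [seg_toApprox]
    exact (hΨ l S₀ hl).papprox j

def comap (Ψ : HPT k) (src : Loc → Loc) (hsrc : {l | src l ≠ l}.Finite) : HPT k :=
  ⟨fun l => Ψ.1 (src l), finite_ne_none_comp Ψ.2 hsrc⟩

variable {src : Loc → Loc} {hsrc : {l | src l ≠ l}.Finite}

theorem comap_trunc (Ψ : HPT k) (j : ℕ) :
    (Ψ.comap src hsrc).trunc j = (Ψ.trunc j).comap src hsrc :=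
  rfl

theorem lookA_comap (Ψ : HPT k) (j : ℕ) (l : Loc) :
    (Ψ.comap src hsrc).lookA j l = Ψ.lookA j (src l) :=
  rfl

theorem IsTy.comap {Ψ : HPT k} (hΨ : Ψ.IsTy) : (Ψ.comap src hsrc).IsTy :=
  fun l => hΨ (src l)

end HPT

theorem StExt.trans {s t u : St} (h₁ : StExt s t) (h₂ : StExt t u) : StExt s u := by
  obtain ⟨hk₁, hd₁, hl₁⟩ := h₁
  obtain ⟨hk₂, hd₂, hl₂⟩ := h₂
  refine ⟨hk₂.trans hk₁, hd₁.trans hd₂, fun l hl => ?_⟩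
  rw [hl₂ l (hd₁ hl), t.Ψ.lookA_of_le hk₂, hl₁ l hl, ← s.Ψ.lookA_of_le hk₂]

theorem stExt_trunc {k n : ℕ} (Ψ : HPT k) (h : n ≤ k) : StExt ⟨k, Ψ⟩ ⟨n, Ψ.trunc n⟩ :=
  ⟨h, (Ψ.dom_trunc n).ge, fun l _ => Ψ.lookA_trunc le_rfl l⟩

theorem stExt_comap {k : ℕ} {Ψ : HPT k} {src : Loc → Loc} {hsrc : {l | src l ≠ l}.Finite}
    (hfix : ∀ l ∈ Ψ.dom, src l = l) : StExt ⟨k, Ψ⟩ ⟨k, Ψ.comap src hsrc⟩ :=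
  ⟨le_rfl, fun l hl => by simpa [HPT.dom, HPT.comap, hfix l hl] using hl,
    fun l hl => by rw [HPT.lookA_comap, hfix l hl]⟩

theorem HeapOk.trunc {h : Heap} {k n : ℕ} {Ψ : HPT k} (hok : HeapOk h Ψ) (hn : n ≤ k) :
    HeapOk h (Ψ.trunc n) := by
  refine ⟨fun l hl => hok.1 l (Ψ.dom_trunc n ▸ hl), fun j hj l S hS v hv => ?_⟩
  cases hl : Ψ.1 l with
  | none => simp [HPT.trunc, hl] at hS
  | some S₀ =>
    obtain rfl : toApprox (Approx.seg S₀) n = S := by simpa [HPT.trunc, hl] using hS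
    rw [seg_toApprox, Ψ.trunc_trunc hj.le]
    exact ⟨hok.2 j (hj.trans_le hn) l S₀ hl v hv, hj⟩

theorem HeapOk.comap {h h' : Heap} {k : ℕ} {Ψ : HPT k} {src : Loc → Loc}
    {hsrc : {l | src l ≠ l}.Finite} (hok : HeapOk h Ψ) (hΨ : Ψ.IsTy)
    (hfix : ∀ l ∈ Ψ.dom, src l = l) (hh' : ∀ l, h'.fn l = h.fn (src l)) :
    HeapOk h' (Ψ.comap src hsrc) := by
  refine ⟨fun l hl => hh' l ▸ hok.1 (src l) hl, fun j hj l S hS v hv => ?_⟩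
  have hfix' : ∀ l ∈ (Ψ.trunc j).dom, src l = l := fun l hl => hfix l (Ψ.dom_trunc j ▸ hl)
  rw [HPT.comap_trunc]
  exact hΨ (src l) S hS _ (hok.2 j hj (src l) S hS v (hh' l ▸ hv)) j _ (stExt_comap hfix')

section ObjectType

variable {D : Finset MethName} {ν : MethName → Variance} {τs : MethName → PreType}

theorem refTy_relocate {μ : Variance} {τ : PreType} {K n : ℕ} {Ψ : HPT K} {Ψ' : HPT n}
    {l l' : Loc} (hn : n ≤ K) (hlook : Ψ'.lookA n l' = Ψ.lookA n l)
    (h : (⟨K, Ψ, l⟩ : RefEl) ∈ refTy μ τ) : (⟨n, Ψ', l'⟩ : RefEl) ∈ refTy μ τ := by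
  have hentry : ∀ S, Ψ.1 l = some S →
      ∃ S', Ψ'.1 l' = some S' ∧ papprox (Approx.seg S') n = papprox (Approx.seg S) n := by
    intro S hS
    rw [HPT.lookA_eq_some hS] at hlook
    cases hS' : Ψ'.1 l' with
    | none => simp [HPT.lookA, HPT.look, hS'] at hlook
    | some S' => exact ⟨S', rfl, Option.some.inj ((HPT.lookA_eq_some hS' n).symm.trans hlook)⟩
  cases μ <;> obtain ⟨S, hS, hrel⟩ := h <;> obtain ⟨S', hS', heq⟩ := hentry S hS <;>
    refine ⟨S', hS', ?_⟩ <;> rw [heq]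
  · exact papprox_eq_of_le hn hrel
  · exact papprox_subset_of_le hn hrel
  · exact papprox_subset_of_le hn hrel

theorem objSlice.exists_vobj {k : ℕ} {Ψ : HPT k} {w : CVal} (h : objSlice D ν τs k Ψ w) :
    ∃ E ls, w.1 = .vobj E ls := by
  rw [objSlice] at h
  obtain ⟨E, ls, hw, -⟩ := h
  exact ⟨E, ls, hw⟩

theorem objSlice_relocate {K n : ℕ} {Ψ : HPT K} {Ψ' : HPT n} (hext : StExt ⟨K, Ψ⟩ ⟨n, Ψ'⟩)
    {E : Finset MethName} {ls ls' : MethName → Loc}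
    (hlook : ∀ e ∈ E, Ψ'.lookA n (ls' e) = Ψ.lookA n (ls e))
    {w w' : CVal} (hw : w.1 = .vobj E ls) (hw' : w'.1 = .vobj E ls')
    (hobj : objSlice D ν τs K Ψ w) : objSlice D ν τs n Ψ' w' := by
  have hn : n ≤ K := hext.1
  rw [objSlice] at hobj ⊢
  obtain ⟨E₀, ls₀, hw₀, hDE, α', hα', hsub, hrefs, hclosed⟩ := hobj
  obtain ⟨rfl, rfl⟩ := Tm.vobj.inj (hw.symm.trans hw₀)
  refine ⟨E, ls', hw', hDE, α', hα', fun t ht => ?_,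
    fun d hd => refTy_relocate hn (hlook d (hDE hd)) (hrefs d hd),
    fun j hj Ψ'' ls'' hext' hlook' => hclosed j (hj.trans_le hn) Ψ'' ls'' (hext.trans hext')
      fun e he => ?_⟩
  · exact ⟨ht.2, (hsub (papprox_mono α' hn ht)).2⟩
  · rw [hlook' e he, Ψ'.lookA_of_le hj.le, hlook e he, ← Ψ.lookA_of_le hj.le]

end ObjectType

open Classical in
noncomputable def cloneSource (E : Finset MethName) (ls ls' : MethName → Loc) (l : Loc) : Loc :=
  if l ∈ ls' '' E then ls (Function.invFunOn ls' E l) else l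

theorem cloneSource_apply {E : Finset MethName} {ls ls' : MethName → Loc}
    (hinj : Set.InjOn ls' E) {e : MethName} (he : e ∈ E) :
    cloneSource E ls ls' (ls' e) = ls e := by
  rw [cloneSource, if_pos (Set.mem_image_of_mem ls' he), hinj.leftInvOn_invFunOn he]

theorem cloneSource_of_notMem {E : Finset MethName} {ls ls' : MethName → Loc} {l : Loc}
    (hl : l ∉ ls' '' E) : cloneSource E ls ls' l = l := by
  rw [cloneSource, if_neg hl]

theorem finite_cloneSource_ne (E : Finset MethName) (ls ls' : MethName → Loc) :
    {l | cloneSource E ls ls' l ≠ l}.Finite :=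
  (E.finite_toSet.image ls').subset fun _ hl => by_contra fun h => hl (cloneSource_of_notMem h)

theorem Head.clone_inv {h h' : Heap} {a b : Tm} (hd : Head (h, .clone a) (h', b)) :
    ∃ E ls ls', a = .vobj E ls ∧ b = .vobj E ls' ∧ Set.InjOn ls' E ∧
      (∀ e ∈ E, h.fn (ls' e) = none) ∧ ∀ l, h'.fn l = h.fn (cloneSource E ls ls' l) := by
  cases hd with
  | @clone _ _ E ls ls' hfresh hinj hcopy hrest =>
    refine ⟨E, ls, ls', rfl, rfl, hinj, hfresh, fun l => ?_⟩
    by_cases hl : l ∈ ls' '' E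
    · obtain ⟨e, he, rfl⟩ := hl
      rw [hcopy e he, cloneSource_apply hinj he]
    · rw [cloneSource_of_notMem hl, hrest l fun e he h => hl ⟨e, he, h⟩]

theorem exists_head_clone (h : Heap) (E : Finset MethName) (ls : MethName → Loc) :
    ∃ c, Head (h, .clone (.vobj E ls)) c := by
  obtain ⟨N, hN⟩ := h.fin.bddAbove
  set ls' : MethName → Loc := fun e => N + 1 + e
  have hinj : Set.InjOn ls' E := fun x _ y _ hxy => by simpa [ls'] using hxy
  let h' : Heap := ⟨fun l => h.fn (cloneSource E ls ls' l),
    finite_ne_none_comp h.fin (finite_cloneSource_ne E ls ls')⟩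
  refine ⟨(h', .vobj E ls'), Head.clone (fun e _ => ?_) hinj
    (fun e he => congrArg h.fn (cloneSource_apply hinj he))
    (fun l hl => congrArg h.fn (cloneSource_of_notMem fun ⟨e, he, h⟩ => hl e he h))⟩
  by_contra hne
  exact Nat.not_succ_le_self N ((Nat.le_add_right _ e).trans (hN hne))

theorem Head.not_isVal {h : Heap} {a : Tm} {c : Config} (hd : Head (h, a) c) : ¬ IsVal a := by
  intro hv
  cases hd <;> cases hv

theorem IsVal.of_plug {E : ECtx} {a : Tm} (h : IsVal (E.plug a)) : IsVal a := by
  induction E with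
  | hole => exact h
  | fold E ih => cases h with | fold h => exact ih h
  | pack E ih => cases h with | pack h => exact ih h
  | _ => cases h

theorem IsVal.irred {v : Tm} (hv : IsVal v) (h : Heap) : Irred (h, v) := by
  rintro ⟨c, ⟨E, hd⟩⟩
  exact hd.not_isVal hv.of_plug

theorem StepN.cons {n : ℕ} {c c' c'' : Config} (h₁ : Step c c') (h₂ : StepN n c' c'') :
    StepN (n + 1) c c'' := by
  induction h₂ with
  | refl => exact .tail (.refl c) h₁
  | tail _ hs ih => exact .tail (ih h₁) hs

theorem StepN.succ_inv {n : ℕ} {c c'' : Config} (h : StepN (n + 1) c c'') :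
    ∃ c', Step c c' ∧ StepN n c' c'' := by
  induction n generalizing c'' with
  | zero =>
    cases h with
    | tail h₁ h₂ => cases h₁; exact ⟨c'', h₂, .refl c''⟩
  | succ m ih =>
    cases h with
    | tail h₁ h₂ =>
      obtain ⟨c', hs, hsn⟩ := ih h₁
      exact ⟨c', hs, hsn.tail h₂⟩

theorem StepN.eq_of_irred {n : ℕ} {c c' : Config} (h : StepN n c c') (hi : Irred c) :
    n = 0 ∧ c' = c := by
  cases n with
  | zero => cases h; exact ⟨rfl, rfl⟩
  | succ m =>
    obtain ⟨c₁, hs, -⟩ := h.succ_inv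
    exact absurd ⟨c₁, hs⟩ hi

theorem Step.clone {h h' : Heap} {a a' : Tm} (hs : Step (h, a) (h', a')) :
    Step (h, .clone a) (h', .clone a') := by
  cases hs with
  | ctx E hd => exact .ctx (.clone E) hd

theorem Step.clone_inv {h : Heap} {a : Tm} {c : Config} (hs : Step (h, .clone a) c) :
    Head (h, .clone a) c ∨ ∃ h' a', Step (h, a) (h', a') ∧ c = (h', .clone a') := by
  obtain ⟨E, h', a₀, a₀', hplug, rfl, hd⟩ : ∃ (E : ECtx) (h' : Heap) (a₀ a₀' : Tm),
      Tm.clone a = E.plug a₀ ∧ c = (h', E.plug a₀') ∧ Head (h, a₀) (h', a₀') := by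
    generalize hc₀ : (h, Tm.clone a) = c₀ at hs
    cases hs with
    | ctx E hd =>
      obtain ⟨rfl, hplug⟩ := Prod.mk.inj hc₀
      exact ⟨E, _, _, _, hplug, rfl, hd⟩
  cases E with
  | hole => exact .inl (hplug ▸ hd)
  | clone E =>
    cases hplug
    exact .inr ⟨h', E.plug a₀', .ctx E hd, rfl⟩
  | _ => cases hplug

theorem StepN.clone_inv {j : ℕ} {h : Heap} {a : Tm} {c : Config}
    (hs : StepN j (h, .clone a) c) (hirr : Irred c) :
    ∃ i h₁ a₁, StepN i (h, a) (h₁, a₁) ∧ Irred (h₁, a₁) ∧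
      (i = j ∧ c = (h₁, .clone a₁) ∨ j = i + 1 ∧ Head (h₁, .clone a₁) c) := by
  induction j generalizing h a with
  | zero =>
    cases hs
    exact ⟨0, h, a, .refl _, fun ⟨⟨h', a'⟩, hst⟩ => hirr ⟨_, hst.clone⟩, .inl ⟨rfl, rfl⟩⟩
  | succ m ih =>
    obtain ⟨⟨h', b⟩, hstep, hrest⟩ := hs.succ_inv
    rcases hstep.clone_inv with hd | ⟨h', a', hst, hc⟩
    · obtain ⟨E, ls, ls', rfl, rfl, -⟩ := hd.clone_inv
      obtain ⟨rfl, rfl⟩ := hrest.eq_of_irred ((IsVal.vobj E ls').irred h')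
      exact ⟨0, h, _, .refl _, (IsVal.vobj E ls).irred h, .inr ⟨rfl, hd⟩⟩
    · rw [hc] at hrest
      obtain ⟨i, h₁, a₁, hsn, hirr₁, hcase⟩ := ih hrest
      refine ⟨i + 1, h₁, a₁, StepN.cons hst hsn, hirr₁, ?_⟩
      rcases hcase with ⟨rfl, hc'⟩ | ⟨rfl, hd⟩
      · exact .inl ⟨rfl, hc'⟩
      · exact .inr ⟨rfl, hd⟩

theorem objSlice_clone {D : Finset MethName} {ν : MethName → Variance}
    {τs : MethName → PreType} {K n : ℕ} (hn : n ≤ K) {Ψ : HPT K} (hΨ : Ψ.IsTy)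
    {h₁ h₂ : Heap} (hok : HeapOk h₁ Ψ) {w : CVal} (hobj : objSlice D ν τs K Ψ w) {b : Tm}
    (hd : Head (h₁, .clone w.1) (h₂, b)) :
    ∃ Ψ' : HPT n, Ψ'.IsTy ∧ StExt ⟨K, Ψ⟩ ⟨n, Ψ'⟩ ∧ HeapOk h₂ Ψ' ∧
      ∃ hb : IsVal b ∧ fv b = ∅, objSlice D ν τs n Ψ' ⟨b, hb⟩ := by
  obtain ⟨E, ls, ls', hw, rfl, hinj, hfresh, hcopy⟩ := hd.clone_inv
  have hfix : ∀ l ∈ (Ψ.trunc n).dom, cloneSource E ls ls' l = l := by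
    refine fun l hl => cloneSource_of_notMem ?_
    rintro ⟨e, he, rfl⟩
    exact hok.1 _ (Ψ.dom_trunc n ▸ hl) (hfresh e he)
  let Ψ' := (Ψ.trunc n).comap (cloneSource E ls ls') (finite_cloneSource_ne E ls ls')
  have hext : StExt ⟨K, Ψ⟩ ⟨n, Ψ'⟩ := (stExt_trunc Ψ hn).trans (stExt_comap hfix)
  refine ⟨Ψ', (hΨ.trunc n).comap, hext, (hok.trunc hn).comap (hΨ.trunc n) hfix hcopy,
    ⟨IsVal.vobj E ls', rfl⟩, objSlice_relocate hext (fun e he => ?_) hw rfl hobj⟩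
  rw [HPT.lookA_comap, cloneSource_apply hinj he, Ψ.lookA_trunc le_rfl]

theorem semClone_general (D : Finset MethName) (ν : MethName → Variance) (τs : MethName → PreType)
    (Γ : SemEnv)
    (a : Tm) (h : SemJudg Γ a (objTy D ν τs)) :
    SemJudg Γ (Tm.clone a) (objTy D ν τs) := by
  refine ⟨h.1, fun k Ψ hΨ σ hσ j hj h₀ h' b hok hsteps hirr => ?_⟩
  obtain ⟨i, h₁, a₁, hsteps₁, hirr₁, ⟨rfl, hstuck⟩ | ⟨rfl, hd⟩⟩ := hsteps.clone_inv hirr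
  · obtain ⟨Ψ₁, -, -, -, ha₁, hobj⟩ := h.2 k Ψ hΨ σ hσ i hj h₀ h₁ a₁ hok hsteps₁ hirr₁
    obtain ⟨E, ls, rfl⟩ := objSlice.exists_vobj hobj
    obtain ⟨c, hc⟩ := exists_head_clone h₁ E ls
    exact (hirr ⟨c, hstuck ▸ Step.ctx .hole hc⟩).elim
  · obtain ⟨Ψ₁, hΨ₁, hext₁, hok₁, ha₁, hobj⟩ :=
      h.2 k Ψ hΨ σ hσ i (by omega) h₀ h₁ a₁ hok hsteps₁ hirr₁
    obtain ⟨Ψ', hΨ', hext', hok', hb, hobj'⟩ :=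
      objSlice_clone (n := k - (i + 1)) (by omega) hΨ₁ hok₁ hobj (w := ⟨a₁, ha₁⟩) hd
    exact ⟨Ψ', hΨ', hext₁.trans hext', hok', hb, hobj'⟩

/-- **(SemClone) Object cloning.** If `Σ ⊨ a : [m_d :ν_d τ_d]_{d∈D}` then
`Σ ⊨ clone(a) : [m_d :ν_d τ_d]_{d∈D}`. -/
theorem semClone (D : Finset MethName) (ν : MethName → Variance) (τs : MethName → PreType)
    (hτ : ∀ d ∈ D, IsSemType (τs d)) (Γ : SemEnv) (hΓ : EnvSem Γ)
    (a : Tm) (h : SemJudg Γ a (objTy D ν τs)) :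
    SemJudg Γ (Tm.clone a) (objTy D ν τs) :=
  semClone_general D ν τs Γ a h

end ImpObj
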